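/- Let P ⊆ ℂ be compact, equipped with the restriction of Lebesgue measure, let 1 ≤ q < ∞, let a : P → ℂ be continuous and b ∈ L^q(P, ℂ). (a) If the scalar pair (a, b) is L^q-ensemble reachable, i.e. span{θ ↦ a(θ)^k b(θ) : k ∈ ℕ} is dense in L^q(P, ℂ), then b(θ) ≠ 0 for almost all θ ∈ P and a is essentially univalent, i.e. there is a measurable set S ⊆ P of full measure such that the restriction of a to S is injective. (b) Conversely, if a is essentially univalent, b(θ) ≠ 0 for almost all θ ∈ P, and inf over polynomials p ∈ ℂ[z] of ∫_P |p(a(θ)) b(θ) − conj(a(θ)) b(θ)|^q dθ equals 0, then (a, b) is L^q-ensemble reachable. -/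

import Mathlib

/-!
(a) If `b` vanished on a set `Z` of positive measure, every `p(a) b` would vanish on `Z` and stay
at distance at least `‖𝟙_Z‖_q` from `𝟙_Z`. Approximating `θ ↦ θ b(θ)` by `pₙ(a) b` and passing to
an a.e. convergent subsequence gives `pₙ(a(θ)) → θ` for almost every `θ`, so `a` is injective on
the set where this convergence holds.

(b) The closure `R` of `{p(a) b}` in `Lᵠ` is invariant under multiplication by `a`, and, since
`conj(a) b ∈ R`, also under multiplication by `conj a`. The continuous multipliers leaving `R`
invariant form a closed subalgebra of `C(P, ℂ)`, so by Stone–Weierstrass `g(a) b ∈ R` for every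
continuous `g : ℂ → ℂ`. Essential univalence and `b ≠ 0` a.e. write any `f ∈ Lᵠ` as `ψ(a) b`
with `ψ` Borel, and `‖(g - ψ)(a) b‖_{Lᵠ(μ)} = ‖g - ψ‖_{Lᵠ(ν)}` for the finite measure
`ν = a_*(|b|^q μ)`, in which bounded continuous functions are dense.
-/

open Polynomial MeasureTheory

/-- The restriction of Lebesgue measure on `ℂ` to a subset `P`, as a measure on the
subtype `↥P`. -/
noncomputable def lebesgueOn (P : Set ℂ) : Measure P :=
  Measure.comap Subtype.val volume

/-- `L^q`-ensemble reachability of a scalar pair `(a, b)`: the span of the functions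
`θ ↦ a(θ)^k b(θ)`, i.e. of `θ ↦ p(a(θ)) b(θ)` for polynomials `p`, is dense in
`L^q(P, ℂ)`. -/
def LqEnsembleReachableScalar (P : Set ℂ) (q : ℝ) (a b : P → ℂ) : Prop :=
  ∀ f : P → ℂ, MemLp f (ENNReal.ofReal q) (lebesgueOn P) →
    ∀ ε : ℝ, 0 < ε → ∃ p : Polynomial ℂ,
      eLpNorm (fun θ => p.eval (a θ) * b θ - f θ) (ENNReal.ofReal q) (lebesgueOn P)
        < ENNReal.ofReal ε

open Filter Topology ENNReal

theorem ContinuousMap.comp_mem_elemental {α : Type*} [TopologicalSpace α] [CompactSpace α]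
    (a : C(α, ℂ)) (g : C(ℂ, ℂ)) : g.comp a ∈ StarAlgebra.elemental ℂ a := by
  have : CompactSpace (Set.range a) := isCompact_iff_compactSpace.mp (isCompact_range a.continuous)
  let ρ : C(α, Set.range a) := ⟨Set.rangeFactorization a, a.continuous.rangeFactorization⟩
  let S := (StarAlgebra.elemental ℂ a).comap (ContinuousMap.compStarAlgHom' ℂ ℂ ρ)
  have hS : IsClosed (S : Set C(Set.range a, ℂ)) :=
    (StarAlgebra.elemental.isClosed ℂ a).preimage (ContinuousMap.continuous_precomp ρ)
  have hid : ContinuousMap.restrict (Set.range a) (.id ℂ) ∈ S := StarAlgebra.elemental.self_mem ℂ a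
  have hS_top := StarAlgebra.elemental.le_of_mem hS hid
  rw [ContinuousMap.elemental_id_eq_top] at hS_top
  exact hS_top (StarSubalgebra.mem_top (x := g.restrict (Set.range a)))

namespace MeasureTheory

section Reachability

variable {α : Type*} [MeasurableSpace α] {μ : Measure α} {p : ℝ≥0∞}

/-- `LqEnsembleReachableScalar P q a b` is `IsEnsembleReachable (lebesgueOn P) (ENNReal.ofReal q) a b`
by definition. -/
def IsEnsembleReachable (μ : Measure α) (p : ℝ≥0∞) (a b : α → ℂ) : Prop :=
  ∀ f : α → ℂ, MemLp f p μ → ∀ ε : ℝ, 0 < ε → ∃ r : ℂ[X],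
    eLpNorm (fun x => r.eval (a x) * b x - f x) p μ < ENNReal.ofReal ε

namespace IsEnsembleReachable

variable {a b : α → ℂ}

theorem ae_ne_zero [IsFiniteMeasure μ] (h : IsEnsembleReachable μ p a b) (hp : p ≠ 0)
    (hb : AEStronglyMeasurable b μ) : ∀ᵐ x ∂μ, b x ≠ 0 := by
  obtain ⟨b', hb'm, hbb'⟩ := hb
  set Z := {x | b' x = 0}
  have hZ : MeasurableSet Z := hb'm.measurable (measurableSet_singleton 0)
  have hle : ∀ ε : ℝ, 0 < ε →
      eLpNorm (Z.indicator fun _ => (1 : ℂ)) p μ ≤ ENNReal.ofReal ε := fun ε hε => by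
    obtain ⟨r, hr⟩ := h _ ((memLp_const (1 : ℂ)).indicator hZ) ε hε
    refine (eLpNorm_mono_ae ?_).trans hr.le
    filter_upwards [hbb'] with x hx
    by_cases hxZ : x ∈ Z
    · simp_all [Z]
    · simp only [Set.indicator_of_notMem hxZ, sub_zero, norm_zero]
      positivity
  have h0 : (Z.indicator fun _ => (1 : ℂ)) =ᵐ[μ] 0 :=
    (eLpNorm_eq_zero_iff (aestronglyMeasurable_const.indicator hZ) hp).1
      (le_antisymm (ENNReal.le_of_forall_pos_le_add fun ε hε _ => by
        simpa only [zero_add, ENNReal.ofReal_coe_nnreal] using hle ε hε) bot_le)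
  filter_upwards [h0, hbb'] with x hx hx'
  rw [hx']
  simpa [Z] using hx

theorem exists_seq_tendsto_ae (h : IsEnsembleReachable μ p a b) (hp : p ≠ 0)
    (ha : AEStronglyMeasurable a μ) (hb : AEStronglyMeasurable b μ) {f : α → ℂ}
    (hf : MemLp f p μ) :
    ∃ r : ℕ → ℂ[X], ∀ᵐ x ∂μ, Tendsto (fun n => (r n).eval (a x) * b x) atTop (𝓝 (f x)) := by
  choose r hr using fun n : ℕ => h f hf (1 / (n + 1)) Nat.one_div_pos_of_nat
  have hlim : Tendsto (fun n => eLpNorm ((fun x => (r n).eval (a x) * b x) - f) p μ)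
      atTop (𝓝 0) := by
    refine tendsto_of_tendsto_of_tendsto_of_le_of_le tendsto_const_nhds ?_ (fun n => zero_le)
      fun n => (hr n).le
    simpa using ENNReal.tendsto_ofReal tendsto_one_div_add_atTop_nhds_zero_nat
  obtain ⟨ns, -, hns⟩ := (tendstoInMeasure_of_tendsto_eLpNorm hp
    (fun n => ((r n).continuous.comp_aestronglyMeasurable ha).mul hb) hf.1 hlim
    ).exists_seq_tendsto_ae
  exact ⟨r ∘ ns, hns⟩

theorem exists_injOn [IsFiniteMeasure μ] (h : IsEnsembleReachable μ p a b) (hp : p ≠ 0)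
    (ha : AEStronglyMeasurable a μ) (hb : AEStronglyMeasurable b μ) {c : α → ℂ}
    (hc : Function.Injective c) (hcb : MemLp (fun x => c x * b x) p μ) :
    ∃ S : Set α, MeasurableSet S ∧ μ Sᶜ = 0 ∧ S.InjOn a := by
  obtain ⟨r, hr⟩ := h.exists_seq_tendsto_ae hp ha hb hcb
  set T := {x | Tendsto (fun n => (r n).eval (a x)) atTop (𝓝 (c x))}
  have hT : ∀ᵐ x ∂μ, x ∈ T := by
    filter_upwards [hr, h.ae_ne_zero hp hb] with x hx hbx
    simpa [T, mul_div_cancel_right₀ _ hbx] using hx.div_const (b x)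
  have hTinj : T.InjOn a := fun x hx y hy hxy =>
    hc (tendsto_nhds_unique (hxy ▸ hx : Tendsto _ atTop (𝓝 (c x))) hy)
  refine ⟨(toMeasurable μ Tᶜ)ᶜ, (measurableSet_toMeasurable μ _).compl, ?_,
    hTinj.mono (Set.compl_subset_comm.1 (subset_toMeasurable μ _))⟩
  rw [compl_compl, measure_toMeasurable]
  exact hT

end IsEnsembleReachable

end Reachability

section

variable {α β : Type*} [MeasurableSpace α] [MeasurableSpace β] {μ : Measure α} {p : ℝ≥0∞}

theorem eLpNorm_comp_mul_eq_eLpNorm_map_withDensity (hp0 : p ≠ 0) (hp : p ≠ ∞)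
    {a : α → β} (ha : Measurable a) {b : α → ℂ} (hb : Measurable b) {ψ : β → ℂ}
    (hψ : Measurable ψ) :
    eLpNorm (fun x => ψ (a x) * b x) p μ
      = eLpNorm ψ p ((μ.withDensity fun x => ‖b x‖ₑ ^ p.toReal).map a) := by
  rw [eLpNorm_map_measure hψ.aestronglyMeasurable ha.aemeasurable,
    eLpNorm_eq_lintegral_rpow_enorm_toReal hp0 hp, eLpNorm_eq_lintegral_rpow_enorm_toReal hp0 hp,
    lintegral_withDensity_eq_lintegral_mul _ (by fun_prop) (by fun_prop)]
  simp only [Function.comp_apply, Pi.mul_apply, enorm_mul,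
    ENNReal.mul_rpow_of_nonneg _ _ ENNReal.toReal_nonneg, mul_comm]

theorem exists_measurable_comp_ae_eq [StandardBorelSpace α] [MeasurableSpace.CountablySeparated β]
    {γ : Type*} [MeasurableSpace γ] [Nonempty γ] {a : α → β} (ha : Measurable a) {S : Set α}
    (hS : MeasurableSet S) (hSc : μ Sᶜ = 0) (hinj : S.InjOn a) {h : α → γ} (hh : Measurable h) :
    ∃ ψ : β → γ, Measurable ψ ∧ ψ ∘ a =ᵐ[μ] h := by
  have := hS.standardBorel
  have hemb : MeasurableEmbedding (S.domRestrict a) :=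
    (ha.comp measurable_subtype_coe).measurableEmbedding hinj.injective
  refine ⟨Function.extend (S.domRestrict a) (S.domRestrict h) fun _ => Classical.arbitrary γ,
    hemb.measurable_extend (hh.comp measurable_subtype_coe) measurable_const, ?_⟩
  filter_upwards [mem_ae_iff.2 hSc] with x hx
  exact hemb.injective.extend_apply _ _ ⟨x, hx⟩

end

section Multipliers

variable {α : Type*} [TopologicalSpace α] [CompactSpace α] [MeasurableSpace α] [BorelSpace α]
  {μ : Measure α} {p : ℝ≥0∞}

theorem memLp_continuousMap_mul (m : C(α, ℂ)) {b : α → ℂ} (hb : MemLp b p μ) :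
    MemLp (fun x => m x * b x) p μ :=
  hb.mul' (BoundedContinuousFunction.mkOfCompact m).memLp_top

variable [IsFiniteMeasure μ] [Fact (1 ≤ p)]

variable (μ p) in
noncomputable def mulLp : C(α, ℂ) →L[ℂ] Lp ℂ p μ →L[ℂ] Lp ℂ p μ :=
  ((ContinuousLinearMap.mul ℂ ℂ).holderL μ ∞ p p).comp (ContinuousMap.toLp ∞ μ ℂ)

theorem coeFn_mulLp (m : C(α, ℂ)) (f : Lp ℂ p μ) :
    mulLp μ p m f =ᵐ[μ] fun x => m x * f x := by
  filter_upwards [(ContinuousLinearMap.mul ℂ ℂ).coeFn_holder (r := p)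
    (ContinuousMap.toLp ∞ μ ℂ m) f, ContinuousMap.coeFn_toLp (p := ∞) (𝕜 := ℂ) μ m] with x hx hm
  rw [mulLp, ContinuousLinearMap.comp_apply, ContinuousLinearMap.holderL_apply_apply, hx, ← hm]
  rfl

theorem mulLp_mul (m n : C(α, ℂ)) (f : Lp ℂ p μ) :
    mulLp μ p (m * n) f = mulLp μ p m (mulLp μ p n f) := by
  ext1
  filter_upwards [coeFn_mulLp (m * n) f, coeFn_mulLp m (mulLp μ p n f), coeFn_mulLp n f]
    with x h₁ h₂ h₃
  simp [h₁, h₂, h₃, mul_assoc]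

theorem mulLp_algebraMap (c : ℂ) (f : Lp ℂ p μ) :
    mulLp μ p (algebraMap ℂ C(α, ℂ) c) f = c • f := by
  ext1
  filter_upwards [coeFn_mulLp (algebraMap ℂ C(α, ℂ) c) f, Lp.coeFn_smul c f] with x h₁ h₂
  simp [h₁, h₂]

def invariantMultipliers (V : Submodule ℂ (Lp ℂ p μ)) : Subalgebra ℂ C(α, ℂ) where
  carrier := {m | ∀ f ∈ V, mulLp μ p m f ∈ V}
  mul_mem' {m n} hm hn f hf := by
    simpa only [mulLp_mul] using hm _ (hn f hf)
  add_mem' {m n} hm hn f hf := by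
    simpa only [map_add, add_apply] using V.add_mem (hm f hf) (hn f hf)
  algebraMap_mem' c f hf := by
    simpa only [mulLp_algebraMap] using V.smul_mem c hf

theorem isClosed_invariantMultipliers {V : Submodule ℂ (Lp ℂ p μ)}
    (hV : IsClosed (V : Set (Lp ℂ p μ))) :
    IsClosed (invariantMultipliers V : Set C(α, ℂ)) := by
  simp only [invariantMultipliers, Subalgebra.coe_mk, Set.ofPred_forall]
  exact isClosed_biInter fun f _ => hV.preimage ((mulLp μ p).continuous.clm_apply continuous_const)

theorem elemental_le_invariantMultipliers {V : Submodule ℂ (Lp ℂ p μ)}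
    (hV : IsClosed (V : Set (Lp ℂ p μ))) {a : C(α, ℂ)} (ha : a ∈ invariantMultipliers V)
    (ha' : star a ∈ invariantMultipliers V) :
    (StarAlgebra.elemental ℂ a).toSubalgebra ≤ invariantMultipliers V := by
  intro m hm
  induction hm using StarAlgebra.elemental.induction_on with
  | self => exact ha
  | star_self => exact ha'
  | algebraMap r => exact Subalgebra.algebraMap_mem _ r
  | add u _ v _ hu hv => exact add_mem hu hv
  | mul u _ v _ hu hv => exact mul_mem hu hv
  | closure s _ hs v hv =>
    exact closure_minimal (fun u hu => hs u hu) (isClosed_invariantMultipliers hV) hv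

variable (μ p) in
noncomputable def reachableSubspace (a : C(α, ℂ)) (b : Lp ℂ p μ) : Submodule ℂ (Lp ℂ p μ) :=
  (Subalgebra.toSubmodule (Algebra.adjoin ℂ {a})).map
    ((mulLp μ p).flip b : C(α, ℂ) →ₗ[ℂ] Lp ℂ p μ) |>.topologicalClosure

variable {a n : C(α, ℂ)} {b : Lp ℂ p μ}

theorem isClosed_reachableSubspace :
    IsClosed (reachableSubspace μ p a b : Set (Lp ℂ p μ)) :=
  Submodule.isClosed_topologicalClosure _

theorem mulLp_mem_reachableSubspace {m : C(α, ℂ)} (hm : m ∈ Algebra.adjoin ℂ {a}) :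
    mulLp μ p m b ∈ reachableSubspace μ p a b :=
  Submodule.le_topologicalClosure _ ⟨m, hm, rfl⟩

theorem mem_invariantMultipliers_reachableSubspace
    (h : ∀ m ∈ Algebra.adjoin ℂ {a}, mulLp μ p n (mulLp μ p m b) ∈ reachableSubspace μ p a b) :
    n ∈ invariantMultipliers (reachableSubspace μ p a b) := by
  intro f hf
  rw [← SetLike.mem_coe, reachableSubspace, Submodule.topologicalClosure_coe] at hf
  exact isClosed_reachableSubspace.closure_subset <|
    map_mem_closure (mulLp μ p n).continuous hf (by rintro _ ⟨m, hm, rfl⟩; exact h m hm)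

theorem adjoin_le_invariantMultipliers :
    Algebra.adjoin ℂ {a} ≤ invariantMultipliers (reachableSubspace μ p a b) := by
  refine Algebra.adjoin_le (Set.singleton_subset_iff.2 ?_)
  refine mem_invariantMultipliers_reachableSubspace fun m hm => ?_
  rw [← mulLp_mul]
  exact mulLp_mem_reachableSubspace (mul_mem (Algebra.self_mem_adjoin_singleton ℂ a) hm)

theorem star_mem_invariantMultipliers
    (hstar : mulLp μ p (star a) b ∈ reachableSubspace μ p a b) :
    star a ∈ invariantMultipliers (reachableSubspace μ p a b) := by
  refine mem_invariantMultipliers_reachableSubspace fun m hm => ?_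
  rw [← mulLp_mul, mul_comm, mulLp_mul]
  exact adjoin_le_invariantMultipliers hm _ hstar

theorem comp_mulLp_mem_reachableSubspace
    (hstar : mulLp μ p (star a) b ∈ reachableSubspace μ p a b) (g : C(ℂ, ℂ)) :
    mulLp μ p (g.comp a) b ∈ reachableSubspace μ p a b := by
  have hb : b ∈ reachableSubspace μ p a b := by
    have := mulLp_mem_reachableSubspace (a := a) (b := b) (one_mem _)
    rwa [← map_one (algebraMap ℂ C(α, ℂ)), mulLp_algebraMap, one_smul] at this
  exact elemental_le_invariantMultipliers isClosed_reachableSubspace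
    (adjoin_le_invariantMultipliers (Algebra.self_mem_adjoin_singleton ℂ a))
    (star_mem_invariantMultipliers hstar) (ContinuousMap.comp_mem_elemental a g) b hb

theorem reachableSubspace_eq_top [StandardBorelSpace α] (hp : p ≠ ∞) {S : Set α}
    (hS : MeasurableSet S) (hSc : μ Sᶜ = 0) (hinj : S.InjOn a) (hb : ∀ᵐ x ∂μ, b x ≠ 0)
    (hstar : mulLp μ p (star a) b ∈ reachableSubspace μ p a b) :
    reachableSubspace μ p a b = ⊤ := by
  refine eq_top_iff.2 fun f _ => isClosed_reachableSubspace.closure_subset <|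
    EMetric.mem_closure_iff.2 fun ε hε => ?_
  have hp0 : p ≠ 0 := (zero_lt_one.trans_le Fact.out).ne'
  have hbm := (Lp.stronglyMeasurable b).measurable
  obtain ⟨ψ, hψm, hψ⟩ := exists_measurable_comp_ae_eq a.continuous.measurable hS hSc hinj
    ((Lp.stronglyMeasurable f).measurable.div hbm)
  have hf : (fun x => ψ (a x) * b x) =ᵐ[μ] f := by
    filter_upwards [hψ, hb] with x h₁ h₂
    simp only [Function.comp_apply] at h₁
    rw [h₁, Pi.div_apply, div_mul_cancel₀ _ h₂]
  set ν := (μ.withDensity fun x => ‖b x‖ₑ ^ p.toReal).map a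
  have : IsFiniteMeasure ν := by
    have := isFiniteMeasure_withDensity
      (lintegral_rpow_enorm_lt_top_of_eLpNorm_lt_top hp0 hp (Lp.eLpNorm_lt_top b)).ne
    infer_instance
  have hψLp : MemLp ψ p ν := ⟨hψm.aestronglyMeasurable, by
    rw [← eLpNorm_comp_mul_eq_eLpNorm_map_withDensity hp0 hp a.continuous.measurable hbm hψm,
      eLpNorm_congr_ae hf]
    exact Lp.eLpNorm_lt_top f⟩
  obtain ⟨δ, hδ, hδε⟩ := exists_between hε
  obtain ⟨g, hg, -⟩ := hψLp.exists_boundedContinuous_eLpNorm_sub_le hp hδ.ne'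
  refine ⟨_, comp_mulLp_mem_reachableSubspace hstar g.toContinuousMap, ?_⟩
  calc edist f (mulLp μ p (g.toContinuousMap.comp a) b)
      = eLpNorm (fun x => (ψ - ⇑g) (a x) * b x) p μ := by
        rw [Lp.edist_def]
        refine eLpNorm_congr_ae ?_
        filter_upwards [hf, coeFn_mulLp (g.toContinuousMap.comp a) b] with x h₁ h₂
        simp [← h₁, h₂, sub_mul]
    _ = eLpNorm (ψ - ⇑g) p ν :=
        eLpNorm_comp_mul_eq_eLpNorm_map_withDensity hp0 hp a.continuous.measurable hbm
          (hψm.sub g.continuous.measurable)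
    _ < ε := hg.trans_lt hδε

theorem mem_reachableSubspace_iff {b : α → ℂ} (hb : MemLp b p μ) (F : Lp ℂ p μ) :
    F ∈ reachableSubspace μ p a (hb.toLp b) ↔ ∀ ε : ℝ, 0 < ε → ∃ r : ℂ[X],
      eLpNorm (fun x => r.eval (a x) * b x - F x) p μ < ENNReal.ofReal ε := by
  have hdist : ∀ r : ℂ[X], edist F (mulLp μ p (aeval a r) (hb.toLp b))
      = eLpNorm (fun x => r.eval (a x) * b x - F x) p μ := fun r => by
    rw [Lp.edist_def, eLpNorm_sub_comm]
    refine eLpNorm_congr_ae ?_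
    filter_upwards [coeFn_mulLp (aeval a r) (hb.toLp b), hb.coeFn_toLp] with x h₁ h₂
    simp [h₁, h₂, aeval_continuousMap_apply]
  rw [← SetLike.mem_coe, reachableSubspace, Submodule.topologicalClosure_coe,
    EMetric.mem_closure_iff, Algebra.adjoin_singleton_eq_range_aeval]
  constructor
  · intro h ε hε
    obtain ⟨_, ⟨_, ⟨r, rfl⟩, rfl⟩, hlt⟩ := h _ (ENNReal.ofReal_pos.2 hε)
    exact ⟨r, hdist r ▸ hlt⟩
  · intro h ε hε
    obtain ⟨δ, -, hδ, hδε⟩ := ENNReal.lt_iff_exists_real_btwn.1 hε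
    obtain ⟨r, hr⟩ := h δ (ENNReal.ofReal_pos.1 hδ)
    exact ⟨_, ⟨aeval a r, ⟨r, rfl⟩, rfl⟩, (hdist r).trans_lt (hr.trans hδε)⟩

theorem isEnsembleReachable_of_reachableSubspace_eq_top {b : α → ℂ} (hb : MemLp b p μ)
    (h : reachableSubspace μ p a (hb.toLp b) = ⊤) : IsEnsembleReachable μ p a b :=
  fun f hf ε hε => by
    obtain ⟨r, hr⟩ := (mem_reachableSubspace_iff hb (hf.toLp f)).1 (h ▸ Submodule.mem_top) ε hε
    refine ⟨r, (eLpNorm_congr_ae ?_).trans_lt hr⟩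
    filter_upwards [hf.coeFn_toLp] with x hx
    rw [hx]

theorem mulLp_star_mem_reachableSubspace (hp : p ≠ ∞) {b : α → ℂ} (hb : MemLp b p μ)
    (h : ∀ ε : ℝ, 0 < ε → ∃ r : ℂ[X],
      ∫ x, ‖r.eval (a x) * b x - starRingEnd ℂ (a x) * b x‖ ^ p.toReal ∂μ < ε) :
    mulLp μ p (star a) (hb.toLp b) ∈ reachableSubspace μ p a (hb.toLp b) := by
  have hp0 : p ≠ 0 := (zero_lt_one.trans_le Fact.out).ne'
  refine (mem_reachableSubspace_iff hb _).2 fun ε hε => ?_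
  obtain ⟨r, hr⟩ := h (ε ^ p.toReal) (by positivity)
  have hF := (memLp_continuousMap_mul (aeval a r) hb).sub (memLp_continuousMap_mul (star a) hb)
  refine ⟨r, ?_⟩
  calc eLpNorm (fun x => r.eval (a x) * b x - mulLp μ p (star a) (hb.toLp b) x) p μ
      = eLpNorm ((fun x => aeval a r x * b x) - fun x => (star a) x * b x) p μ := by
        refine eLpNorm_congr_ae ?_
        filter_upwards [coeFn_mulLp (star a) (hb.toLp b), hb.coeFn_toLp] with x h₁ h₂
        simp [h₁, h₂, aeval_continuousMap_apply]
    _ < ENNReal.ofReal ε := by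
        rw [hF.eLpNorm_eq_integral_rpow_norm hp0 hp, ENNReal.ofReal_lt_ofReal_iff hε,
          Real.rpow_inv_lt_iff_of_pos (integral_nonneg fun _ => by positivity) hε.le
            (ENNReal.toReal_pos hp0 hp)]
        simpa [aeval_continuousMap_apply] using hr

end Multipliers

end MeasureTheory

theorem isFiniteMeasure_lebesgueOn {P : Set ℂ} (hP : IsCompact P) :
    IsFiniteMeasure (lebesgueOn P) :=
  ⟨by simpa [lebesgueOn, comap_subtype_coe_apply hP.measurableSet] using
    hP.measure_lt_top⟩

/-- (a) if the scalar pair `(a, b)` is `L^q`-ensemble reachable then `b` is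
a.e. nonzero and `a` is essentially univalent (injective on a set of full measure);
(b) conversely, if `a` is essentially univalent, `b` is a.e. nonzero and the infimum over
polynomials `p` of `∫_P |p(a)b − conj(a) b|^q` is `0`, then `(a, b)` is `L^q`-ensemble
reachable. -/
theorem stmt_17 (P : Set ℂ) (hP : IsCompact P) (q : ℝ) (hq : 1 ≤ q)
    (a : P → ℂ) (ha : Continuous a)
    (b : P → ℂ) (hb : MemLp b (ENNReal.ofReal q) (lebesgueOn P)) :
    (LqEnsembleReachableScalar P q a b →
      (∀ᵐ θ ∂(lebesgueOn P), b θ ≠ 0) ∧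
      ∃ S : Set P, MeasurableSet S ∧ (lebesgueOn P) Sᶜ = 0 ∧ Set.InjOn a S) ∧
    (((∃ S : Set P, MeasurableSet S ∧ (lebesgueOn P) Sᶜ = 0 ∧ Set.InjOn a S) →
      (∀ᵐ θ ∂(lebesgueOn P), b θ ≠ 0) →
      (∀ ε : ℝ, 0 < ε → ∃ p : Polynomial ℂ,
        (∫ θ, ‖p.eval (a θ) * b θ - (starRingEnd ℂ) (a θ) * b θ‖ ^ q ∂(lebesgueOn P)) < ε) →
      LqEnsembleReachableScalar P q a b)) := by
  have hq0 : 0 < q := zero_lt_one.trans_le hq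
  have hp0 : ENNReal.ofReal q ≠ 0 := (ENNReal.ofReal_pos.2 hq0).ne'
  have : Fact (1 ≤ ENNReal.ofReal q) := ⟨ENNReal.one_le_ofReal.2 hq⟩
  have : CompactSpace P := isCompact_iff_compactSpace.mp hP
  have : PolishSpace P := hP.isClosed.polishSpace
  have := isFiniteMeasure_lebesgueOn hP
  let a' : C(P, ℂ) := ⟨a, ha⟩
  refine ⟨fun hr => ⟨IsEnsembleReachable.ae_ne_zero hr hp0 hb.1,
    IsEnsembleReachable.exists_injOn hr hp0 ha.aestronglyMeasurable hb.1 Subtype.val_injective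
      (memLp_continuousMap_mul ⟨Subtype.val, continuous_subtype_val⟩ hb)⟩, ?_⟩
  rintro ⟨S, hS, hSc, hinj⟩ hbne hconj
  refine isEnsembleReachable_of_reachableSubspace_eq_top (a := a') hb <|
    reachableSubspace_eq_top ENNReal.ofReal_ne_top hS hSc hinj ?_ <|
      mulLp_star_mem_reachableSubspace ENNReal.ofReal_ne_top hb ?_
  · filter_upwards [hbne, hb.coeFn_toLp] with θ h₁ h₂
    rwa [h₂]
  · rwa [ENNReal.toReal_ofReal hq0.le]
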